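/- arXiv:2511.14296 — 9 statements merged into one kernel-verified Lean document; each statement's English description precedes it below -/
import Mathlib

section
/- For every integer n ≥ 2, let G_k : Matrix (Fin n) (Fin n) ℝ (for k = 0, 1, …, n−2) be the Givens rotation matrix that agrees with the identity matrix outside rows and columns k and k+1 and, on the standard basis vectors, acts by G_k e_k = c_k e_k + s_k e_{k+1} and G_k e_{k+1} = −s_k e_k + c_k e_{k+1}, where c_k = 1/√(n−k) and s_k = √((n−k−1)/(n−k)). Then the product G_{n−2} · G_{n−3} ⋯ G_1 · G_0 applied to the first standard basis vector e_0 equals the uniform vector (1/√n) Σ_{j=0}^{n−1} e_j. -/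
/-!
After the first `m` rotations the state has amplitude `1/√n` on each of the coordinates
`0, …, m-1` and the remaining amplitude `√((n-m)/n)` on coordinate `m`. The rotation `G_m`
splits that last amplitude into `c_m √((n-m)/n) = 1/√n` on coordinate `m` and
`s_m √((n-m)/n) = √((n-m-1)/n)` on coordinate `m+1`; after `n-1` steps the last coordinate
carries `√(1/n)` as well.
-/

open Matrix

def givensRotation (n k : ℕ) (c s : ℝ) : Matrix (Fin n) (Fin n) ℝ := fun i j =>
  if (i : ℕ) = k ∧ (j : ℕ) = k then c
  else if (i : ℕ) = k + 1 ∧ (j : ℕ) = k then s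
  else if (i : ℕ) = k ∧ (j : ℕ) = k + 1 then -s
  else if (i : ℕ) = k + 1 ∧ (j : ℕ) = k + 1 then c
  else if i = j then 1 else 0

/-- The action of `givensRotation n k c s` on a vector of `ℝⁿ` written as the restriction of
`f : ℕ → ℝ`, so that the coordinates `k` and `k + 1` need no bound proofs. -/
def rotatePair (k : ℕ) (c s : ℝ) (f : ℕ → ℝ) (i : ℕ) : ℝ :=
  if i = k then c * f k - s * f (k + 1)
  else if i = k + 1 then s * f k + c * f (k + 1)
  else f i

theorem givensRotation_apply_eq_zero {n k : ℕ} {c s : ℝ} {i j : Fin n} (hji : j ≠ i)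
    (h : (i : ℕ) ≠ k ∧ (i : ℕ) ≠ k + 1 ∨ (j : ℕ) ≠ k ∧ (j : ℕ) ≠ k + 1) :
    givensRotation n k c s i j = 0 := by
  simp only [givensRotation]
  split_ifs <;> first | rfl | omega

theorem givensRotation_mulVec {n k : ℕ} (hk : k + 1 < n) (c s : ℝ) (f : ℕ → ℝ) :
    givensRotation n k c s *ᵥ (fun j => f j) = fun i : Fin n => rotatePair k c s f i := by
  ext i
  by_cases hi : (i : ℕ) = k ∨ (i : ℕ) = k + 1
  · rw [mulVec, dotProduct, Finset.sum_eq_add ⟨k, by omega⟩ ⟨k + 1, hk⟩ (by simp [Fin.ext_iff])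
      (fun j _ hj => ?_) (by simp) (by simp)]
    · rcases hi with hi | hi <;> simp [givensRotation, rotatePair, hi, sub_eq_add_neg]
    · simp only [ne_eq, Fin.ext_iff] at hj
      rw [givensRotation_apply_eq_zero (by rw [Ne, Fin.ext_iff]; omega) (Or.inr hj), zero_mul]
  · rw [not_or] at hi
    rw [mulVec, dotProduct, Finset.sum_eq_single i
      (fun j _ hji => by rw [givensRotation_apply_eq_zero hji (Or.inl hi), zero_mul]) (by simp)]
    simp [givensRotation, rotatePair, hi]

noncomputable def cascadeAmplitude (n m j : ℕ) : ℝ :=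
  if j < m then 1 / √n else if j = m then √((n - m) / n) else 0

theorem cascadeAmplitude_of_lt {n m j : ℕ} (h : j < m) : cascadeAmplitude n m j = 1 / √n :=
  if_pos h

theorem cascadeAmplitude_self (n m : ℕ) : cascadeAmplitude n m m = √((n - m) / n) := by
  simp [cascadeAmplitude]

theorem cascadeAmplitude_of_gt {n m j : ℕ} (h : m < j) : cascadeAmplitude n m j = 0 := by
  simp [cascadeAmplitude, h.not_gt, h.ne']

theorem rotatePair_cascadeAmplitude {n m : ℕ} (hm : m < n) :
    rotatePair m (1 / √(n - m)) √((n - m - 1) / (n - m)) (cascadeAmplitude n m) =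
      cascadeAmplitude n (m + 1) := by
  have hnm : (0 : ℝ) < n - m := by rw [sub_pos]; exact_mod_cast hm
  have hn : (0 : ℝ) ≤ n := n.cast_nonneg
  funext i
  rcases lt_trichotomy i m with hi | rfl | hi
  · rw [rotatePair, if_neg hi.ne, if_neg (by omega), cascadeAmplitude_of_lt hi,
      cascadeAmplitude_of_lt (by omega)]
  · rw [rotatePair, if_pos rfl, cascadeAmplitude_self, cascadeAmplitude_of_gt (lt_add_one i),
      cascadeAmplitude_of_lt (lt_add_one i), mul_zero, sub_zero, Real.sqrt_div' _ hn]
    field_simp [(Real.sqrt_pos.2 hnm).ne']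
  rcases (Nat.succ_le_of_lt hi).eq_or_lt with rfl | hi'
  · rw [rotatePair, if_neg (by omega), if_pos rfl, cascadeAmplitude_self, cascadeAmplitude_self,
      cascadeAmplitude_of_gt (lt_add_one m), mul_zero, add_zero, Nat.cast_succ, ← sub_sub,
      Real.sqrt_div' _ hn, Real.sqrt_div' _ hn, Real.sqrt_div' _ hnm.le]
    field_simp [(Real.sqrt_pos.2 hnm).ne']
  · rw [rotatePair, if_neg (by omega), if_neg (by omega), cascadeAmplitude_of_gt hi,
      cascadeAmplitude_of_gt hi']

theorem cascadeAmplitude_zero {n : ℕ} (hn : 0 < n) :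
    (fun j : Fin n => cascadeAmplitude n 0 j) = Pi.single ⟨0, hn⟩ 1 := by
  funext j
  simp [cascadeAmplitude, Pi.single_apply, Fin.ext_iff, hn.ne']

theorem cascadeAmplitude_pred {n j : ℕ} (hj : j < n) : cascadeAmplitude n (n - 1) j = 1 / √n := by
  rcases (Nat.le_sub_one_of_lt hj).lt_or_eq with hj' | rfl
  · exact cascadeAmplitude_of_lt hj'
  · rw [cascadeAmplitude_self, Nat.cast_pred (by omega), sub_sub_cancel,
      Real.sqrt_div' _ n.cast_nonneg, Real.sqrt_one]

theorem givensCascade_mulVec {n : ℕ} {G : ℕ → Matrix (Fin n) (Fin n) ℝ}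
    (hG : ∀ k, k + 1 < n → G k = givensRotation n k (1 / √(n - k)) √((n - k - 1) / (n - k)))
    {m : ℕ} (hm : m < n) :
    ((List.range m).reverse.map G).prod *ᵥ (fun j : Fin n => cascadeAmplitude n 0 j) =
      fun j : Fin n => cascadeAmplitude n m j := by
  induction m with
  | zero => exact one_mulVec _
  | succ m ih =>
    rw [List.range_succ, List.reverse_append, List.map_append, List.prod_append, ← mulVec_mulVec,
      ih (by omega), List.reverse_singleton, List.map_singleton, List.prod_singleton, hG m hm,
      givensRotation_mulVec hm, rotatePair_cascadeAmplitude (by omega)]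

/-- Correctness of the cascade of `n-1` Givens rotations preparing the uniform
(`W_n`) vector from the first standard basis vector, in the one-excitation sector. -/
theorem givens_cascade_prepares_uniform (n : ℕ) (hn : 2 ≤ n)
    (G : ℕ → Matrix (Fin n) (Fin n) ℝ)
    (hG : ∀ k, k ≤ n - 2 → ∀ i j : Fin n,
      G k i j =
        if (i : ℕ) = k ∧ (j : ℕ) = k then 1 / Real.sqrt ((n : ℝ) - k)
        else if (i : ℕ) = k + 1 ∧ (j : ℕ) = k then
          Real.sqrt (((n : ℝ) - k - 1) / ((n : ℝ) - k))
        else if (i : ℕ) = k ∧ (j : ℕ) = k + 1 then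
          -Real.sqrt (((n : ℝ) - k - 1) / ((n : ℝ) - k))
        else if (i : ℕ) = k + 1 ∧ (j : ℕ) = k + 1 then 1 / Real.sqrt ((n : ℝ) - k)
        else if i = j then 1 else 0) :
    (((List.range (n - 1)).reverse.map G).prod) *ᵥ (Pi.single (⟨0, by omega⟩ : Fin n) (1 : ℝ)) =
      fun _ => 1 / Real.sqrt n := by
  have hrot : ∀ k, k + 1 < n →
      G k = givensRotation n k (1 / √(n - k)) √((n - k - 1) / (n - k)) :=
    fun k hk => Matrix.ext (hG k (by omega))
  rw [← cascadeAmplitude_zero, givensCascade_mulVec hrot (by omega)]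
  funext j
  exact cascadeAmplitude_pred j.isLt
end

section
/- Let n ≥ 2 and let 1 ≤ i ≤ n−1. Define the matrix M : Matrix (Fin i → Bool) (Fin (n−i) → Bool) ℂ by M a b = 1/√n if the total number of coordinates t with a t = true plus the number of coordinates t with b t = true equals 1, and M a b = 0 otherwise (M is the coefficient matrix of the uniform W_n state reshaped across the cut between the first i qubits and the last n−i qubits). Then the rank of M equals 2. -/
open Matrix

/-- The reshaped coefficient matrix of the uniform `W_n` state across the cut
between the first `i` qubits and the last `n - i` qubits has rank (Schmidt rank) `2`. -/
theorem w_state_schmidt_rank_two (n i : ℕ) (hn : 2 ≤ n) (hi1 : 1 ≤ i) (hi2 : i ≤ n - 1)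
    (M : Matrix (Fin i → Bool) (Fin (n - i) → Bool) ℂ)
    (hM : ∀ a b, M a b =
      if (Finset.univ.filter fun t => a t = true).card +
          (Finset.univ.filter fun t => b t = true).card = 1
      then ((1 / Real.sqrt n : ℝ) : ℂ) else 0) :
    M.rank = 2 := by
  haveI : NeZero i := ⟨by omega⟩
  haveI : NeZero (n - i) := ⟨by omega⟩
  set c : ℂ := ((1 / Real.sqrt n : ℝ) : ℂ) with hc
  have hc0 : c ≠ 0 := by
    have : Real.sqrt n ≠ 0 := by
      refine ne_of_gt (Real.sqrt_pos.mpr ?_)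
      exact_mod_cast Nat.lt_of_lt_of_le (by norm_num) hn
    simp [hc, this]
  -- weight function
  set wa : (Fin i → Bool) → ℕ := fun a => (Finset.univ.filter fun t => a t = true).card with hwa
  set wb : (Fin (n - i) → Bool) → ℕ := fun b => (Finset.univ.filter fun t => b t = true).card with hwb
  -- upper bound via factorization
  set A : Matrix (Fin i → Bool) (Fin 2) ℂ := fun a k => if wa a = (k : ℕ) then c else 0 with hA
  set B : Matrix (Fin 2) (Fin (n - i) → Bool) ℂ := fun k b => if wb b + (k : ℕ) = 1 then 1 else 0 with hB
  have hMAB : M = A * B := by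
    ext a b
    rw [hM a b, mul_apply, Fin.sum_univ_two]
    have ea : (Finset.univ.filter fun t => a t = true).card = wa a := rfl
    have eb : (Finset.univ.filter fun t => b t = true).card = wb b := rfl
    rw [ea, eb]
    simp only [hA, hB, Fin.val_zero, Fin.val_one, add_zero]
    split_ifs <;> first | ring1 | omega
  have hub : M.rank ≤ 2 := by
    rw [hMAB]
    calc (A * B).rank ≤ A.rank := rank_mul_le_left A B
      _ ≤ Fintype.card (Fin 2) := rank_le_card_width A
      _ = 2 := by simp
  -- lower bound via submatrix
  set e : Fin 2 → (Fin i → Bool) := ![fun _ => false, fun t => t == 0] with he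
  set f : Fin 2 → (Fin (n - i) → Bool) := ![fun _ => false, fun t => t == 0] with hf
  have hwa0 : wa (fun _ => false) = 0 := by simp [hwa]
  have hwa1 : wa (fun t => t == 0) = 1 := by
    simp [hwa, beq_iff_eq, Finset.filter_eq']
  have hwb0 : wb (fun _ => false) = 0 := by simp [hwb]
  have hwb1 : wb (fun t => t == 0) = 1 := by
    simp [hwb, beq_iff_eq, Finset.filter_eq']
  set P : Matrix (Fin 2) (Fin i → Bool) ℂ := fun k a => if a = e k then 1 else 0 with hP
  set Q : Matrix (Fin (n - i) → Bool) (Fin 2) ℂ := fun b k => if b = f k then 1 else 0 with hQ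
  have hS : ∀ k l, (P * M * Q) k l = M (e k) (f l) := by
    intro k l
    rw [mul_apply]
    have h1 : ∀ b, (P * M) k b = M (e k) b := by
      intro b
      rw [mul_apply]
      simp [hP, ite_mul]
    simp only [h1, hQ, mul_ite, mul_one, mul_zero]
    simp
  have hdet : (P * M * Q).det = -(c * c) := by
    rw [det_fin_two, hS, hS, hS, hS]
    rw [hM, hM, hM, hM]
    simp only [he, hf, Matrix.cons_val_zero, Matrix.cons_val_one, Matrix.head_cons]
    rw [show (Finset.univ.filter fun t => (fun _ : Fin i => false) t = true).card = 0 from hwa0]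
    rw [show (Finset.univ.filter fun t => ((fun t : Fin i => t == 0)) t = true).card = 1 from hwa1]
    rw [show (Finset.univ.filter fun t => (fun _ : Fin (n-i) => false) t = true).card = 0 from hwb0]
    rw [show (Finset.univ.filter fun t => ((fun t : Fin (n-i) => t == 0)) t = true).card = 1 from hwb1]
    norm_num
  have hunit : IsUnit (P * M * Q) := by
    rw [Matrix.isUnit_iff_isUnit_det, isUnit_iff_ne_zero, hdet]
    simpa using hc0
  have hlb : 2 ≤ M.rank := by
    have h2 : (P * M * Q).rank = 2 := by
      rw [Matrix.rank_of_isUnit _ hunit]; simp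
    calc 2 = (P * M * Q).rank := h2.symm
      _ ≤ (P * M).rank := rank_mul_le_left _ _
      _ ≤ M.rank := rank_mul_le_right _ _
  omega
end

section
/- Let n ≥ 2. For each ordered pair (i, j) with i ≠ j in Fin n, define the hopping matrix T_{ij} : Matrix (Fin n → Bool) (Fin n → Bool) ℂ whose (f, g) entry equals 1 if g i = true, g j = false, and f = Function.update (Function.update g i false) j true, and equals 0 otherwise (T_{ij} is σ_i⁻ σ_j⁺, lowering qubit i and raising qubit j). Let H = Σ_{i ≠ j} T_{ij}. For k : Fin n let w_k : (Fin n → Bool) → ℂ be the standard basis vector supported on the one-hot string that is true exactly at coordinate k. Then H *ᵥ w_k = Σ_{j ≠ k} w_j for every k; consequently the linear span of {w_0, …, w_{n−1}} is invariant under H, and in the basis (w_k) the restriction of H to this span is the adjacency matrix A(K_n) of the complete graph (A i j = 0 if i = j, 1 otherwise). -/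
/-!
A hop `σᵢ⁻ σⱼ⁺` annihilates the one-hot string `e_k` unless the excitation sits at `i = k`,
in which case it moves it to `j`. Summing over the ordered pairs `i ≠ j`, only the hops out
of `k` survive, so `H e_k = ∑_{j ≠ k} e_j`, which is column `k` of `A(K_n)`.
-/

open Matrix

section OneExcitation

variable {ι R : Type*} [DecidableEq ι]

def oneHot (k : ι) : ι → Bool := fun t => decide (t = k)

theorem update_update_oneHot (j k : ι) :
    Function.update (Function.update (oneHot k) k false) j true = oneHot j := by
  funext t
  by_cases htj : t = j <;> by_cases htk : t = k <;> simp [Function.update, oneHot, htj, htk]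

/-- `σᵢ⁻ σⱼ⁺` on `n` qubits, as a matrix on bit strings. -/
def hopping [Fintype ι] [Zero R] [One R] (i j : ι) : Matrix (ι → Bool) (ι → Bool) R := fun f g =>
  if g i = true ∧ g j = false ∧ f = Function.update (Function.update g i false) j true
  then 1 else 0

theorem hopping_mulVec_single_oneHot [Fintype ι] [NonAssocSemiring R] {i j : ι} (hij : i ≠ j)
    (k : ι) :
    (hopping i j : Matrix _ _ R) *ᵥ Pi.single (oneHot k) 1 =
      if i = k then Pi.single (oneHot j) 1 else 0 := by
  funext f
  rw [mulVec_single_one]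
  split_ifs with hik
  · subst hik
    simp [hopping, oneHot, update_update_oneHot, hij.symm, Pi.single_apply]
  · simp [hopping, oneHot, hik]

def xyMixer [Fintype ι] [AddCommMonoid R] [One R] : Matrix (ι → Bool) (ι → Bool) R :=
  ∑ i, ∑ j ∈ Finset.univ.filter (· ≠ i), hopping i j

theorem xyMixer_mulVec_single_oneHot [Fintype ι] [NonAssocSemiring R] (k : ι) :
    (xyMixer : Matrix _ _ R) *ᵥ Pi.single (oneHot k) 1 =
      ∑ j ∈ Finset.univ.filter (· ≠ k), Pi.single (oneHot j) 1 := by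
  have hop : ∀ i, ∀ j ∈ Finset.univ.filter (· ≠ i),
      (hopping i j : Matrix _ _ R) *ᵥ Pi.single (oneHot k) 1 =
        if i = k then Pi.single (oneHot j) 1 else 0 := fun i j hj =>
    hopping_mulVec_single_oneHot (Finset.mem_filter.1 hj).2.symm k
  simp_rw [xyMixer, sum_mulVec, Finset.sum_congr rfl (hop _), Finset.sum_ite_irrel,
    Finset.sum_const_zero, Finset.sum_ite_eq', Finset.mem_univ, if_true]

end OneExcitation

theorem mulVec_mem_span_range {m ι R : Type*} [Fintype m] [CommSemiring R]
    (M : Matrix m m R) (w : ι → m → R) (hM : ∀ k, M *ᵥ w k ∈ Submodule.span R (Set.range w))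
    {v : m → R} (hv : v ∈ Submodule.span R (Set.range w)) :
    M *ᵥ v ∈ Submodule.span R (Set.range w) :=
  (Submodule.span_le (p := (Submodule.span R _).comap M.mulVecLin)).2
    (Set.range_subset_iff.2 hM) hv

theorem xy_mixer_restricts_to_complete_graph_general (n : ℕ)
    (T : Fin n → Fin n → Matrix (Fin n → Bool) (Fin n → Bool) ℂ)
    (hT : ∀ i j, i ≠ j → ∀ f g, T i j f g =
      if g i = true ∧ g j = false ∧
          f = Function.update (Function.update g i false) j true
      then 1 else 0)
    (H : Matrix (Fin n → Bool) (Fin n → Bool) ℂ)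
    (hH : H = ∑ i, ∑ j ∈ Finset.univ.filter (· ≠ i), T i j)
    (w : Fin n → (Fin n → Bool) → ℂ)
    (hw : ∀ k, w k = Pi.single (fun t => decide (t = k)) 1) :
    (∀ k, H *ᵥ w k = ∑ j ∈ Finset.univ.filter (· ≠ k), w j) ∧
    (∀ v ∈ Submodule.span ℂ (Set.range w),
        H *ᵥ v ∈ Submodule.span ℂ (Set.range w)) ∧
    (∀ k, H *ᵥ w k = ∑ j, (if j = k then (0 : ℂ) else 1) • w j) := by
  have hHmixer : H = xyMixer := by
    rw [hH, xyMixer]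
    refine Finset.sum_congr rfl fun i _ => Finset.sum_congr rfl fun j hj => ?_
    ext f g
    exact hT i j (Finset.mem_filter.1 hj).2.symm f g
  have hw' : w = fun k => Pi.single (oneHot k) 1 := funext hw
  subst hHmixer hw'
  beta_reduce
  have hmix := xyMixer_mulVec_single_oneHot (ι := Fin n) (R := ℂ)
  refine ⟨hmix, fun v hv => ?_, fun k => ?_⟩
  · refine mulVec_mem_span_range _ _ (fun k => ?_) hv
    rw [hmix]
    exact Submodule.sum_mem _ fun j _ => Submodule.subset_span (Set.mem_range_self j)
  · simp [hmix, Finset.sum_filter, ite_smul]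

/-- The ladder-operator XY mixer `H = ∑_{i ≠ j} σᵢ⁻ σⱼ⁺` maps the one-hot basis
vector `w_k` to `∑_{j ≠ k} w_j`; hence the one-excitation subspace is invariant
and the restriction of `H` in the basis `(w_k)` is the adjacency matrix of the
complete graph `K_n`. -/
theorem xy_mixer_restricts_to_complete_graph (n : ℕ) (hn : 2 ≤ n)
    (T : Fin n → Fin n → Matrix (Fin n → Bool) (Fin n → Bool) ℂ)
    (hT : ∀ i j, i ≠ j → ∀ f g, T i j f g =
      if g i = true ∧ g j = false ∧
          f = Function.update (Function.update g i false) j true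
      then 1 else 0)
    (H : Matrix (Fin n → Bool) (Fin n → Bool) ℂ)
    (hH : H = ∑ i, ∑ j ∈ Finset.univ.filter (· ≠ i), T i j)
    (w : Fin n → (Fin n → Bool) → ℂ)
    (hw : ∀ k, w k = Pi.single (fun t => decide (t = k)) 1) :
    (∀ k, H *ᵥ w k = ∑ j ∈ Finset.univ.filter (· ≠ k), w j) ∧
    (∀ v ∈ Submodule.span ℂ (Set.range w),
        H *ᵥ v ∈ Submodule.span ℂ (Set.range w)) ∧
    (∀ k, H *ᵥ w k = ∑ j, (if j = k then (0 : ℂ) else 1) • w j) :=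
  xy_mixer_restricts_to_complete_graph_general n T hT H hH w hw
end

section
/- Let n ≥ 1 and let A : Matrix (Fin n) (Fin n) ℂ have entries A i j = 0 if i = j and 1 otherwise. For all i, j : Fin n, the angle-averaged transition probability satisfies (1/(2π)) ∫_{β=0}^{2π} ‖(exp(−(i β) • A)) j i‖² dβ = 1 − 2/n + 2/n² if j = i, and = 2/n² if j ≠ i. -/
/-!
With `J` the all-ones matrix, `A = J - 1` and `P = J / n` is idempotent, so
`e^{-iβA} = e^{iβ} (1 - P + e^{-iβn} P)`. Each entry then has squared modulus
`a + b cos (nβ)` for constants `a, b`, and the cosine term averages to zero over a period.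
-/

open Matrix NormedSpace

theorem NormedSpace.exp_smul_of_isIdempotentElem {𝕂 𝔸 : Type*} [RCLike 𝕂] [Ring 𝔸] [Algebra 𝕂 𝔸]
    [TopologicalSpace 𝔸] [IsTopologicalRing 𝔸] [ContinuousSMul 𝕂 𝔸] [T2Space 𝔸]
    {P : 𝔸} (hP : IsIdempotentElem P) (a : 𝕂) :
    exp (a • P) = exp a • P + (1 - P) := by
  have hsum : HasSum (fun k : ℕ => ((k.factorial : 𝕂)⁻¹ • a ^ k) • P + if k = 0 then 1 - P else 0)
      (exp a • P + (1 - P)) :=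
    ((exp_series_hasSum_exp' a).smul_const P).add (hasSum_ite_eq 0 (1 - P))
  rw [exp_eq_tsum 𝕂, ← hsum.tsum_eq]
  refine tsum_congr fun k => ?_
  rcases Nat.eq_zero_or_pos k with rfl | hk
  · simp
  · rw [smul_pow, hP.pow_eq hk.ne', if_neg hk.ne', add_zero, smul_assoc]

theorem Complex.sq_norm_ofReal_add_exp_mul_I (x θ : ℝ) :
    ‖(x : ℂ) + Complex.exp (θ * Complex.I)‖ ^ 2 = x ^ 2 + 2 * x * Real.cos θ + 1 := by
  rw [Complex.exp_mul_I, ← Complex.ofReal_cos, ← Complex.ofReal_sin, ← add_assoc,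
    ← Complex.ofReal_add, Complex.sq_norm, Complex.normSq_add_mul_I]
  nlinarith [Real.sin_sq_add_cos_sq θ]

theorem integral_const_add_mul_cos_nat_mul {n : ℕ} (hn : n ≠ 0) (a b : ℝ) :
    ∫ β in (0 : ℝ)..(2 * Real.pi), (a + b * Real.cos (n * β)) = 2 * Real.pi * a := by
  have hn' : (n : ℝ) ≠ 0 := Nat.cast_ne_zero.mpr hn
  have hcos : ∫ β in (0 : ℝ)..(2 * Real.pi), Real.cos (n * β) = 0 := by
    rw [intervalIntegral.integral_comp_mul_left Real.cos hn', integral_cos, mul_zero,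
      Real.sin_periodic.nat_mul_eq, sub_self, smul_zero]
  rw [intervalIntegral.integral_add intervalIntegrable_const
      ((by fun_prop : Continuous fun β : ℝ => b * Real.cos (n * β)).intervalIntegrable _ _),
    intervalIntegral.integral_const, intervalIntegral.integral_const_mul, hcos]
  simp

namespace Matrix

variable {ι 𝕜 : Type*}

theorem isIdempotentElem_inv_card_smul_of_const_one [Fintype ι] [Nonempty ι]
    [Field 𝕜] [CharZero 𝕜] :
    IsIdempotentElem ((Fintype.card ι : 𝕜)⁻¹ • of fun _ _ : ι => (1 : 𝕜)) := by
  have hcard : (Fintype.card ι : 𝕜) ≠ 0 := Nat.cast_ne_zero.mpr Fintype.card_ne_zero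
  ext a b
  simp [mul_apply, hcard]

theorem eq_of_one_sub_one_of_apply_eq_ite [DecidableEq ι] [Ring 𝕜] {A : Matrix ι ι 𝕜}
    (hA : ∀ i j, A i j = if i = j then 0 else 1) :
    A = (of fun _ _ : ι => (1 : 𝕜)) - 1 := by
  ext a b
  by_cases h : a = b <;> simp [hA, h]

theorem exp_smul_apply_of_apply_eq_ite [Fintype ι] [DecidableEq ι] [Nonempty ι] {A : Matrix ι ι ℂ}
    (hA : ∀ i j, A i j = if i = j then 0 else 1) (c : ℂ) (i j : ι) :
    exp (c • A) j i = Complex.exp (-c) *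
      ((if j = i then 1 else 0) + (Complex.exp (c * Fintype.card ι) - 1) / Fintype.card ι) := by
  set P : Matrix ι ι ℂ := (Fintype.card ι : ℂ)⁻¹ • of fun _ _ => 1
  have hcard : (Fintype.card ι : ℂ) ≠ 0 := Nat.cast_ne_zero.mpr Fintype.card_ne_zero
  have hsplit : c • A = (c * Fintype.card ι) • P + (-c) • (1 : Matrix ι ι ℂ) := by
    rw [eq_of_one_sub_one_of_apply_eq_ite hA, ← smul_inv_smul₀ hcard (of fun _ _ : ι => (1 : ℂ))]
    module
  have hcomm : Commute ((c * Fintype.card ι) • P) ((-c) • (1 : Matrix ι ι ℂ)) :=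
    ((Commute.one_right P).smul_right _).smul_left _
  rw [hsplit, exp_add_of_commute _ _ hcomm,
    exp_smul_of_isIdempotentElem isIdempotentElem_inv_card_smul_of_const_one,
    exp_smul_of_isIdempotentElem IsIdempotentElem.one, ← Complex.exp_eq_exp_ℂ]
  simp only [P, smul_of, sub_self, add_zero, mul_apply, add_apply, of_apply, Pi.smul_apply,
    smul_eq_mul, mul_one, sub_apply, one_apply, smul_apply, mul_ite, mul_zero, Finset.sum_ite_eq',
    Finset.mem_univ, ↓reduceIte]
  ring

theorem sq_norm_exp_neg_I_mul_smul_apply_of_apply_eq_ite [Fintype ι] [DecidableEq ι]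
    [Nonempty ι] {A : Matrix ι ι ℂ}
    (hA : ∀ i j, A i j = if i = j then 0 else 1) (β : ℝ) (i j : ι) :
    ‖exp ((-(Complex.I * β)) • A) j i‖ ^ 2 =
      (((Fintype.card ι : ℝ) * (if j = i then 1 else 0) - 1) ^ 2 + 1) / (Fintype.card ι : ℝ) ^ 2 +
        2 * ((Fintype.card ι : ℝ) * (if j = i then 1 else 0) - 1) / (Fintype.card ι : ℝ) ^ 2 *
          Real.cos (Fintype.card ι * β) := by
  set n := Fintype.card ι
  have hn : (n : ℂ) ≠ 0 := Nat.cast_ne_zero.mpr Fintype.card_ne_zero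
  have hentry : (if j = i then 1 else 0) + (Complex.exp (-(Complex.I * β) * n) - 1) / n =
      ((((n : ℝ) * (if j = i then 1 else 0) - 1 : ℝ) : ℂ) +
        Complex.exp ((-(n * β) : ℝ) * Complex.I)) / n := by
    field_simp
    split_ifs <;> push_cast <;> ring_nf
  rw [exp_smul_apply_of_apply_eq_ite hA, norm_mul, neg_neg, Complex.norm_exp_I_mul_ofReal, one_mul,
    hentry, norm_div, div_pow, Complex.sq_norm_ofReal_add_exp_mul_I, Real.cos_neg,
    Complex.norm_natCast]
  ring

end Matrix

theorem xy_mixer_angle_averaged_transition_general (n : ℕ)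
    (A : Matrix (Fin n) (Fin n) ℂ)
    (hA : ∀ i j, A i j = if i = j then 0 else 1) (i j : Fin n) :
    (1 / (2 * Real.pi)) * ∫ β in (0 : ℝ)..(2 * Real.pi),
        ‖(NormedSpace.exp ((-(Complex.I * β)) • A)) j i‖ ^ 2 =
      if j = i then 1 - 2 / (n : ℝ) + 2 / (n : ℝ) ^ 2 else 2 / (n : ℝ) ^ 2 := by
  have : Nonempty (Fin n) := ⟨i⟩
  have hn : n ≠ 0 := i.pos.ne'
  have hn' : (n : ℝ) ≠ 0 := Nat.cast_ne_zero.mpr hn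
  simp_rw [Matrix.sq_norm_exp_neg_I_mul_smul_apply_of_apply_eq_ite hA, Fintype.card_fin]
  rw [integral_const_add_mul_cos_nat_mul hn]
  split_ifs <;> field_simp <;> ring

/-- Angle-averaged transition probabilities of the XY mixer on the one-excitation
subspace: `(1/2π) ∫₀^{2π} |⟨e_j| e^{-iβA} |e_i⟩|² dβ` equals `1 - 2/n + 2/n²` on
the diagonal and `2/n²` off the diagonal. -/
theorem xy_mixer_angle_averaged_transition (n : ℕ) (hn : 1 ≤ n)
    (A : Matrix (Fin n) (Fin n) ℂ)
    (hA : ∀ i j, A i j = if i = j then 0 else 1) (i j : Fin n) :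
    (1 / (2 * Real.pi)) * ∫ β in (0 : ℝ)..(2 * Real.pi),
        ‖(NormedSpace.exp ((-(Complex.I * β)) • A)) j i‖ ^ 2 =
      if j = i then 1 - 2 / (n : ℝ) + 2 / (n : ℝ) ^ 2 else 2 / (n : ℝ) ^ 2 :=
  xy_mixer_angle_averaged_transition_general n A hA i j
end

section
/- Let n ≥ 1, let A : Matrix (Fin n) (Fin n) ℂ have entries A i j = 0 if i = j and 1 otherwise, and define P : Fin n → Fin n → ℝ by P i j = (1/(2π)) ∫_{β=0}^{2π} ‖(exp(−(i β) • A)) j i‖² dβ. Then: (1) every entry of P is strictly positive; (2) for every i, Σ_j P i j = 1 and for every j, Σ_i P i j = 1 (P is doubly stochastic); (3) the uniform distribution π* = (1/n, …, 1/n) is stationary for P, i.e. Σ_i (1/n) P i j = 1/n for every j. -/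
/-!
Write `J = of 1` for the all-ones matrix, so that `A = J - 1` and `E = J / n` is idempotent.
For an idempotent `e` the exponential series collapses to `exp (c • e) = 1 + (exp c - 1) • e`,
hence `exp (-iβA) = e^{iβ} (1 + (e^{-inβ} - 1) E)` and
`|U(β)_{ij}|² = |a + e^{-inβ} / n|² = a² + 1/n² + 2 a cos (nβ) / n` with `a = δ_{ij} - 1/n`.
Averaging over a period kills the cosine, so `P i j = (δ_{ij} - 1/n)² + 1/n²`: positive,
symmetric, with row sums `(1 - 1/n) + 1/n = 1`.
-/

open Matrix Complex

theorem IsIdempotentElem.exp_smul {𝔸 : Type*} [Ring 𝔸] [Algebra ℂ 𝔸] [TopologicalSpace 𝔸]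
    [IsTopologicalRing 𝔸] [ContinuousSMul ℂ 𝔸] [T2Space 𝔸] {e : 𝔸} (he : IsIdempotentElem e)
    (c : ℂ) : NormedSpace.exp (c • e) = 1 + (exp c - 1) • e := by
  have hpow (k : ℕ) : (c • e) ^ k = c ^ k • e + if k = 0 then 1 - e else 0 := by
    rcases k with _ | k
    · simp
    · rw [smul_pow, he.pow_succ_eq]; simp
  have hsum : HasSum (fun k : ℕ => (k.factorial⁻¹ : ℂ) • (c • e) ^ k) (exp c • e + (1 - e)) := by
    simp_rw [hpow, smul_add, smul_smul, smul_ite, smul_zero]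
    refine HasSum.add ?_ ?_
    · rw [exp_eq_exp_ℂ]
      exact (NormedSpace.exp_series_hasSum_exp' (𝕂 := ℂ) c).smul_const e
    · convert hasSum_ite_eq 0 (1 - e) using 2 with k
      split_ifs with hk <;> simp [hk]
  rw [NormedSpace.exp_eq_tsum ℂ]
  exact hsum.tsum_eq.trans (by module)

theorem Complex.sq_norm_ofReal_add_ofReal_mul_exp_mul_I (a b θ : ℝ) :
    ‖(a : ℂ) + b * exp (θ * I)‖ ^ 2 = a ^ 2 + b ^ 2 + 2 * a * b * Real.cos θ := by
  rw [exp_mul_I, Complex.sq_norm, normSq_apply]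
  simp [cos_ofReal_re, sin_ofReal_re]
  linear_combination b ^ 2 * Real.sin_sq_add_cos_sq θ

theorem average_add_mul_cos_nat_mul (p q : ℝ) {k : ℕ} (hk : k ≠ 0) :
    1 / (2 * Real.pi) * ∫ β in (0 : ℝ)..2 * Real.pi, (p + q * Real.cos (k * β)) = p := by
  have hcos : ∫ β in (0 : ℝ)..2 * Real.pi, Real.cos (k * β) = 0 := by
    rw [intervalIntegral.integral_comp_mul_left Real.cos (Nat.cast_ne_zero.mpr hk), integral_cos,
      Real.sin_periodic.nat_mul_eq k]
    simp
  rw [intervalIntegral.integral_add intervalIntegrable_const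
      (Continuous.intervalIntegrable (by fun_prop) _ _),
    intervalIntegral.integral_const_mul, hcos, intervalIntegral.integral_const]
  field_simp
  simp

namespace Matrix

variable {ι : Type*} [Fintype ι]

theorem of_one_mul_of_one {R : Type*} [NonAssocSemiring R] :
    (of 1 : Matrix ι ι R) * of 1 = (Fintype.card ι : R) • of 1 := by
  ext i j
  simp [mul_apply]

theorem isIdempotentElem_inv_card_smul_of_one {K : Type*} [Field K] [CharZero K] [Nonempty ι] :
    IsIdempotentElem ((Fintype.card ι : K)⁻¹ • (of 1 : Matrix ι ι K)) := by
  have hn : (Fintype.card ι : K) ≠ 0 := by simp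
  rw [IsIdempotentElem, smul_mul_smul, of_one_mul_of_one, smul_smul, mul_assoc,
    inv_mul_cancel₀ hn, mul_one]

variable [DecidableEq ι]

theorem exp_smul_of_one_sub_one [Nonempty ι] (c : ℂ) :
    NormedSpace.exp (c • (of 1 - 1 : Matrix ι ι ℂ)) =
      exp (-c) • (1 + (exp (c * Fintype.card ι) - 1) • (Fintype.card ι : ℂ)⁻¹ • of 1) := by
  set n : ℂ := ((Fintype.card ι : ℕ) : ℂ)
  have hn : n ≠ 0 := by simp [n]
  have hsplit : c • (of 1 - 1 : Matrix ι ι ℂ) = (c * n) • (n⁻¹ • of 1) + (-c) • 1 := by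
    rw [smul_smul, mul_assoc, mul_inv_cancel₀ hn, mul_one]
    module
  rw [hsplit, exp_add_of_commute _ _ ((Commute.one_right _).smul_right _),
    isIdempotentElem_inv_card_smul_of_one.exp_smul, IsIdempotentElem.one.exp_smul, mul_add,
    mul_one, mul_smul_comm, mul_one]
  module

theorem sq_norm_exp_smul_of_one_sub_one_apply (β : ℝ) (i j : ι) :
    ‖NormedSpace.exp ((-(I * β)) • (of 1 - 1 : Matrix ι ι ℂ)) i j‖ ^ 2 =
      ((if i = j then 1 else 0) - (Fintype.card ι : ℝ)⁻¹) ^ 2 + ((Fintype.card ι : ℝ)⁻¹) ^ 2 +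
        2 * ((if i = j then 1 else 0) - (Fintype.card ι : ℝ)⁻¹) * (Fintype.card ι : ℝ)⁻¹ *
          Real.cos (Fintype.card ι * β) := by
  have : Nonempty ι := ⟨i⟩
  have hentry : NormedSpace.exp ((-(I * β)) • (of 1 - 1 : Matrix ι ι ℂ)) i j = exp (β * I) *
      ((((if i = j then 1 else 0) - (Fintype.card ι : ℝ)⁻¹ : ℝ) : ℂ) +
        ((Fintype.card ι : ℝ)⁻¹ : ℝ) * exp ((-(Fintype.card ι * β) : ℝ) * I)) := by
    rw [exp_smul_of_one_sub_one]
    simp only [smul_apply, add_apply, one_apply, of_apply, Pi.one_apply, smul_eq_mul]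
    split_ifs <;> push_cast <;> ring_nf
  rw [hentry, norm_mul, norm_exp_ofReal_mul_I, one_mul, sq_norm_ofReal_add_ofReal_mul_exp_mul_I,
    Real.cos_neg]

end Matrix

section AveragedTransition

variable {ι : Type*} [Fintype ι] [DecidableEq ι]

variable (ι) in
noncomputable def averagedTransition (i j : ι) : ℝ :=
  ((if i = j then 1 else 0) - (Fintype.card ι : ℝ)⁻¹) ^ 2 + ((Fintype.card ι : ℝ)⁻¹) ^ 2

theorem average_sq_norm_exp_smul_of_one_sub_one_apply (i j : ι) :
    1 / (2 * Real.pi) * ∫ β in (0 : ℝ)..2 * Real.pi,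
      ‖NormedSpace.exp ((-(I * β)) • (of 1 - 1 : Matrix ι ι ℂ)) i j‖ ^ 2 =
        averagedTransition ι i j := by
  have : Nonempty ι := ⟨i⟩
  simp_rw [sq_norm_exp_smul_of_one_sub_one_apply]
  exact average_add_mul_cos_nat_mul _ _ Fintype.card_ne_zero

theorem averagedTransition_pos (i j : ι) : 0 < averagedTransition ι i j := by
  have : Nonempty ι := ⟨i⟩
  unfold averagedTransition
  positivity

theorem averagedTransition_comm (i j : ι) :
    averagedTransition ι i j = averagedTransition ι j i := by
  simp only [averagedTransition, eq_comm]

theorem sum_averagedTransition (i : ι) : ∑ j, averagedTransition ι i j = 1 := by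
  have : Nonempty ι := ⟨i⟩
  have hn : (Fintype.card ι : ℝ) ≠ 0 := by simp
  have hlin (j : ι) : averagedTransition ι i j = (if i = j then 1 - 2 * (Fintype.card ι : ℝ)⁻¹
      else 0) + 2 * ((Fintype.card ι : ℝ)⁻¹) ^ 2 := by
    unfold averagedTransition
    split_ifs <;> ring
  simp only [hlin, Finset.sum_add_distrib, Finset.sum_ite_eq, Finset.mem_univ, if_true,
    Finset.sum_const, Finset.card_univ, nsmul_eq_mul]
  field_simp
  ring

end AveragedTransition

theorem xy_mixer_transition_matrix_ergodic_general (n : ℕ)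
    (A : Matrix (Fin n) (Fin n) ℂ)
    (hA : ∀ i j, A i j = if i = j then 0 else 1)
    (P : Fin n → Fin n → ℝ)
    (hP : ∀ i j, P i j = (1 / (2 * Real.pi)) * ∫ β in (0 : ℝ)..(2 * Real.pi),
        ‖(NormedSpace.exp ((-(Complex.I * β)) • A)) j i‖ ^ 2) :
    (∀ i j, 0 < P i j) ∧
    (∀ i, ∑ j, P i j = 1) ∧
    (∀ j, ∑ i, P i j = 1) ∧
    (∀ j, ∑ i, (1 / (n : ℝ)) * P i j = 1 / (n : ℝ)) := by
  have hA_eq : A = of 1 - 1 := by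
    ext i j
    rw [hA]
    split_ifs with h <;> simp [h, one_apply_ne]
  have hP_eq (i j : Fin n) : P i j = averagedTransition (Fin n) i j := by
    rw [hP, hA_eq, average_sq_norm_exp_smul_of_one_sub_one_apply, averagedTransition_comm]
  have hcol (j : Fin n) : ∑ i, P i j = 1 := by
    simp only [hP_eq, averagedTransition_comm _ j, sum_averagedTransition]
  refine ⟨fun i j => hP_eq i j ▸ averagedTransition_pos i j, fun i => ?_, hcol, fun j => ?_⟩
  · simp only [hP_eq, sum_averagedTransition]
  · rw [← Finset.mul_sum, hcol, mul_one]

/-- The angle-averaged XY mixer transition matrix `P` has strictly positive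
entries, is doubly stochastic, and has the uniform distribution as a stationary
distribution. -/
theorem xy_mixer_transition_matrix_ergodic (n : ℕ) (hn : 1 ≤ n)
    (A : Matrix (Fin n) (Fin n) ℂ)
    (hA : ∀ i j, A i j = if i = j then 0 else 1)
    (P : Fin n → Fin n → ℝ)
    (hP : ∀ i j, P i j = (1 / (2 * Real.pi)) * ∫ β in (0 : ℝ)..(2 * Real.pi),
        ‖(NormedSpace.exp ((-(Complex.I * β)) • A)) j i‖ ^ 2) :
    (∀ i j, 0 < P i j) ∧
    (∀ i, ∑ j, P i j = 1) ∧
    (∀ j, ∑ i, P i j = 1) ∧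
    (∀ j, ∑ i, (1 / (n : ℝ)) * P i j = 1 / (n : ℝ)) :=
  xy_mixer_transition_matrix_ergodic_general n A hA P hP
end

section
/- Let n ≥ 2 and let d : Fin n → ℝ be a function with Σ_k d k = 0 that is not identically constant (i.e. there exist i, j with d i ≠ d j). In Matrix (Fin n) (Fin n) ℂ, regarded as a Lie algebra over ℝ with bracket ⁅A, B⁆ = A·B − B·A, consider the generating set 𝒢 consisting of the matrices i·(E_{kl} + E_{lk}) for all pairs k < l (where E_{kl} denotes the standard basis matrix with a single 1 in position (k, l)), together with the matrix i·diag(d) (the diagonal matrix with entries i·d k). Then the real Lie subalgebra generated by 𝒢 equals su(n) = {A : Matrix (Fin n) (Fin n) ℂ | Aᴴ = −A and trace A = 0}, the set of traceless skew-Hermitian n×n complex matrices. -/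
open Matrix

attribute [local instance] LieRing.ofAssociativeRing

/-!
A skew-Hermitian `A` is a real combination of the hops `i(E_kl + E_lk)` and `E_kl - E_lk`
(`k ≠ l`) plus `∑ₖ Im(A_kk) • iE_kk`, and when `A` is traceless the coefficients of the latter sum
to zero, so it lies in the span of the differences `i(E_kk - E_ll)`. It thus suffices to reach
these matrices from the generators. Given `k ≠ l`, pick `m` with `d m ≠ d k`: if `m = l` then
`[i·diag(d), i(E_kl + E_lk)] = (d l - d k)(E_kl - E_lk)`, otherwise
`[i(E_km + E_mk), i(E_ml + E_lm)] = -(E_kl - E_lk)`; finally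
`[E_kl - E_lk, i(E_kl + E_lk)] = 2i(E_kk - E_ll)`. Conversely all generators are traceless
skew-Hermitian, and these matrices are closed under the bracket.
-/
namespace Matrix

variable {n α : Type*} [Fintype n] [DecidableEq n] [CommSemiring α]

theorem diagonal_mul_single (f : n → α) (k l : n) (c : α) :
    diagonal f * single k l c = f k • single k l c := by
  ext i j
  by_cases hi : k = i <;> simp [diagonal_mul, single_apply, hi]

theorem single_mul_diagonal (f : n → α) (k l : n) (c : α) :
    single k l c * diagonal f = f l • single k l c := by
  ext i j
  by_cases hj : l = j <;> simp [mul_diagonal, single_apply, hj, mul_comm]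

end Matrix

theorem Submodule.sum_smul_mem_of_forall_sub_mem {R M ι : Type*} [Ring R] [AddCommGroup M]
    [Module R M] [Fintype ι] (p : Submodule R M) {x : ι → M} (hx : ∀ k l, x k - x l ∈ p)
    {c : ι → R} (hc : ∑ k, c k = 0) : ∑ k, c k • x k ∈ p := by
  rcases isEmpty_or_nonempty ι with _ | ⟨⟨j⟩⟩
  · simp
  · have : ∑ k, c k • x k = ∑ k, c k • (x k - x j) := by
      simp [smul_sub, Finset.sum_sub_distrib, ← Finset.sum_smul, hc]
    rw [this]
    exact sum_mem fun k _ => p.smul_mem _ (hx k j)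

namespace XYMixer

variable {ι : Type*} [Fintype ι] [DecidableEq ι]

noncomputable def symHop (k l : ι) : Matrix ι ι ℂ := Complex.I • (single k l 1 + single l k 1)

noncomputable def antiHop (k l : ι) : Matrix ι ι ℂ := single k l 1 - single l k 1

lemma lie_diagonal_symHop (d : ι → ℝ) (k l : ι) :
    ⁅Complex.I • diagonal (fun k => (d k : ℂ)), symHop k l⁆ = (d l - d k) • antiHop k l := by
  simp only [symHop, antiHop, Ring.lie_def, mul_add, add_mul, smul_mul_smul_comm,
    diagonal_mul_single, single_mul_diagonal]
  match_scalars <;> simp <;> ring_nf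

lemma lie_symHop_symHop {k l m : ι} (hkl : k ≠ l) (hkm : k ≠ m) (hml : m ≠ l) :
    ⁅symHop k m, symHop m l⁆ = -antiHop k l := by
  simp only [symHop, antiHop, Ring.lie_def, mul_add, add_mul, smul_mul_smul_comm,
    single_mul_single_same, single_mul_single_of_ne, hkl, hkm, hml, hkl.symm, hkm.symm, hml.symm,
    Ne, not_false_eq_true, mul_one, add_zero, zero_add, Complex.I_mul_I, neg_one_smul]
  abel

lemma lie_antiHop_symHop {k l : ι} (hkl : k ≠ l) :
    ⁅antiHop k l, symHop k l⁆ = symHop k k - symHop l l := by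
  simp only [symHop, antiHop, Ring.lie_def, mul_add, add_mul, sub_mul, mul_sub, mul_smul_comm,
    smul_mul_assoc, single_mul_single_same, single_mul_single_of_ne, hkl, hkl.symm, Ne,
    not_false_eq_true, mul_one]
  module

variable (ι) in
noncomputable def su : LieSubalgebra ℝ (Matrix ι ι ℂ) where
  carrier := {A | Aᴴ = -A ∧ trace A = 0}
  add_mem' := by
    rintro A B ⟨hA, htrA⟩ ⟨hB, htrB⟩
    exact ⟨by rw [conjTranspose_add, hA, hB, neg_add], by rw [trace_add, htrA, htrB, add_zero]⟩
  zero_mem' := by simp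
  smul_mem' := by
    rintro r A ⟨hA, htrA⟩
    exact ⟨by rw [conjTranspose_smul, star_trivial, hA, smul_neg],
      by rw [trace_smul, htrA, smul_zero]⟩
  lie_mem' := by
    rintro A B ⟨hA, -⟩ ⟨hB, -⟩
    refine ⟨?_, by rw [Ring.lie_def, trace_sub, trace_mul_comm, sub_self]⟩
    rw [Ring.lie_def, conjTranspose_sub, conjTranspose_mul, conjTranspose_mul, hA, hB]
    noncomm_ring

lemma symHop_mem_su {k l : ι} (hkl : k ≠ l) : symHop k l ∈ su ι := by
  refine ⟨?_, ?_⟩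
  · simp [symHop, single_neg, add_comm]
  · simp [symHop, trace_single_eq_of_ne _ _ _ hkl, trace_single_eq_of_ne _ _ _ hkl.symm]

lemma I_smul_diagonal_mem_su {d : ι → ℝ} (hd : ∑ k, d k = 0) :
    Complex.I • diagonal (fun k => (d k : ℂ)) ∈ su ι := by
  refine ⟨?_, ?_⟩
  · simp [conjTranspose_smul]
  · simp [trace_diagonal, ← Complex.ofReal_sum, hd]

lemma eq_sum_hops_of_conjTranspose_eq_neg {A : Matrix ι ι ℂ} (hA : Aᴴ = -A) :
    A = ∑ k, ∑ l, (((A k l).re / 2) • antiHop k l + ((A k l).im / 2) • symHop k l) := by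
  have hre (i j : ι) : (A j i).re = -(A i j).re := by
    simpa using congrArg Complex.re (congrFun (congrFun hA i) j)
  have him (i j : ι) : (A j i).im = (A i j).im := by
    simpa using congrArg Complex.im (congrFun (congrFun hA i) j)
  ext i j
  apply Complex.ext <;>
    simp [antiHop, symHop, Matrix.sum_apply, single_apply, ite_and, mul_sub,
      Finset.sum_add_distrib, Finset.sum_sub_distrib, hre i j, him i j, neg_div]

variable {L : LieSubalgebra ℝ (Matrix ι ι ℂ)}

lemma antiHop_mem_of_exists_ne {d : ι → ℝ} (hd : ∃ i j, d i ≠ d j)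
    (hD : Complex.I • diagonal (fun k => (d k : ℂ)) ∈ L) (hS : ∀ k l, k ≠ l → symHop k l ∈ L)
    {k l : ι} (hkl : k ≠ l) : antiHop k l ∈ L := by
  obtain ⟨m, hm⟩ : ∃ m, d m ≠ d k := by
    obtain ⟨i, j, hij⟩ := hd
    by_cases hi : d i = d k
    · exact ⟨j, hi ▸ hij.symm⟩
    · exact ⟨i, hi⟩
  by_cases hml : m = l
  · subst hml
    have h := L.smul_mem (d m - d k)⁻¹ (L.lie_mem hD (hS k m hkl))
    rwa [lie_diagonal_symHop, smul_smul, inv_mul_cancel₀ (sub_ne_zero.mpr hm), one_smul] at h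
  · have hkm : k ≠ m := fun h => hm (h ▸ rfl)
    simpa [lie_symHop_symHop hkl hkm hml] using L.lie_mem (hS k m hkm) (hS m l hml)

lemma su_le_of_hops_mem (hS : ∀ k l, k ≠ l → symHop k l ∈ L)
    (hA : ∀ k l, k ≠ l → antiHop k l ∈ L) : su ι ≤ L := by
  rintro A ⟨hskew, htr⟩
  have hdiag (k l : ι) : symHop k k - symHop l l ∈ L := by
    by_cases hkl : k = l
    · simp [hkl]
    · simpa [lie_antiHop_symHop hkl] using L.lie_mem (hA k l hkl) (hS k l hkl)
  have him : ∑ k, (A k k).im / 2 = 0 := by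
    simpa [← Finset.sum_div, trace, ← Complex.im_sum] using congrArg Complex.im htr
  rw [eq_sum_hops_of_conjTranspose_eq_neg hskew]
  simp only [Finset.sum_add_distrib]
  refine add_mem (sum_mem fun k _ => sum_mem fun l _ => ?_) ?_
  · by_cases hkl : k = l
    · simp [hkl, antiHop]
    · exact L.smul_mem _ (hA k l hkl)
  rw [Finset.sum_congr rfl fun k _ => (Finset.add_sum_erase _ _ (Finset.mem_univ k)).symm,
    Finset.sum_add_distrib]
  refine add_mem (L.toSubmodule.sum_smul_mem_of_forall_sub_mem hdiag him) ?_
  exact sum_mem fun k _ => sum_mem fun l hl =>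
    L.smul_mem _ (hS k l (Finset.ne_of_mem_erase hl).symm)

end XYMixer

open XYMixer in
theorem xy_generators_generate_su_general (n : ℕ)
    (d : Fin n → ℝ) (hsum : ∑ k, d k = 0) (hnc : ∃ i j, d i ≠ d j)
    (𝒢 : Set (Matrix (Fin n) (Fin n) ℂ))
    (h𝒢 : 𝒢 = {A | ∃ k l : Fin n, k < l ∧
        A = Complex.I • (Matrix.single k l 1 + Matrix.single l k 1)} ∪
      {Complex.I • Matrix.diagonal (fun k => (d k : ℂ))}) :
    (LieSubalgebra.lieSpan ℝ (Matrix (Fin n) (Fin n) ℂ) 𝒢 : Set (Matrix (Fin n) (Fin n) ℂ)) =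
      {A : Matrix (Fin n) (Fin n) ℂ | Aᴴ = -A ∧ Matrix.trace A = 0} := by
  subst h𝒢
  set L := LieSubalgebra.lieSpan ℝ (Matrix (Fin n) (Fin n) ℂ) _
  have hD : Complex.I • diagonal (fun k => (d k : ℂ)) ∈ L :=
    LieSubalgebra.subset_lieSpan (Or.inr rfl)
  have hS (k l : Fin n) (hkl : k ≠ l) : symHop k l ∈ L := by
    rcases hkl.lt_or_gt with h | h
    · exact LieSubalgebra.subset_lieSpan (Or.inl ⟨k, l, h, rfl⟩)
    · rw [symHop, add_comm]
      exact LieSubalgebra.subset_lieSpan (Or.inl ⟨l, k, h, rfl⟩)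
  show (L : Set (Matrix (Fin n) (Fin n) ℂ)) = (su (Fin n) : Set _)
  refine congrArg _ (le_antisymm ?_
    (su_le_of_hops_mem hS fun _ _ => antiHop_mem_of_exists_ne hnc hD hS))
  rw [LieSubalgebra.lieSpan_le]
  rintro A (⟨k, l, hkl, rfl⟩ | rfl)
  · exact symHop_mem_su hkl.ne
  · exact I_smul_diagonal_mem_su hsum

/-- The real Lie algebra generated by the symmetric hops `i(E_{kl} + E_{lk})`
(for `k < l`) together with one nonconstant traceless diagonal generator
`i·diag(d)` is all of `su(n)`, the traceless skew-Hermitian matrices. -/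
theorem xy_generators_generate_su (n : ℕ) (hn : 2 ≤ n)
    (d : Fin n → ℝ) (hsum : ∑ k, d k = 0) (hnc : ∃ i j, d i ≠ d j)
    (𝒢 : Set (Matrix (Fin n) (Fin n) ℂ))
    (h𝒢 : 𝒢 = {A | ∃ k l : Fin n, k < l ∧
        A = Complex.I • (Matrix.single k l 1 + Matrix.single l k 1)} ∪
      {Complex.I • Matrix.diagonal (fun k => (d k : ℂ))}) :
    (LieSubalgebra.lieSpan ℝ (Matrix (Fin n) (Fin n) ℂ) 𝒢 : Set (Matrix (Fin n) (Fin n) ℂ)) =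
      {A : Matrix (Fin n) (Fin n) ℂ | Aᴴ = -A ∧ Matrix.trace A = 0} :=
  xy_generators_generate_su_general n d hsum hnc 𝒢 h𝒢
end

section
/- Fix integers n ≥ 1 and m ≥ 1, let I = (Fin m → Fin n) index the computational basis of the encoded one-hot space, and set D = n^m. For a tuple σ : Fin m → Equiv.Perm (Fin n), let Π_σ : Equiv.Perm I be the blockwise permutation x ↦ (fun b => σ b (x b)) and P_σ : Matrix I I ℂ its permutation matrix ((P_σ) x y = 1 if x = Π_σ y, else 0). Then for every matrix U in the unitary group of Matrix I I ℂ and every x* : I, the average over all (n!)^m tuples σ satisfies (1/(n!)^m) • Σ_σ Uᴴ · P_σ · E_{x* x*} · (P_σ)ᴴ · U = (1/D) • 1, where E_{x* x*} is the standard basis matrix with a single 1 in position (x*, x*) and 1 is the identity matrix on ℂ^I. -/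
open Matrix

/-!
Conjugating the basis projector `E_{x x}` by the permutation matrix of `g` gives `E_{g • x, g • x}`.
For a transitive action of a finite group `G` on `X`, the sum `∑ g, f (g • x)` does not depend on
`x` (reindex by `g ↦ g * h`), so averaging over `x` shows that every label is hit by
`|G| / |X|` group elements. Hence the twirled projector is `|X|⁻¹ • 1`, which conjugation by a
unitary leaves unchanged. Independent permutations of the blocks act transitively on the labels.
-/

open Finset MulAction

theorem mul_single_mul_conjTranspose_of_apply_eq_ite {X Y R : Type*} [Fintype Y] [DecidableEq X]
    [DecidableEq Y] [Semiring R] [StarRing R] (f : Y → X) (P : Matrix X Y R)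
    (hP : ∀ i j, P i j = if i = f j then 1 else 0) (y : Y) :
    P * single y y (1 : R) * Pᴴ = single (f y) (f y) 1 := by
  have hcol : P *ᵥ Pi.single y 1 = Pi.single (f y) 1 := by
    ext i; simp [mulVec, dotProduct, hP, Pi.single_apply]
  have hrow : Pi.single y 1 ᵥ* Pᴴ = Pi.single (f y) 1 := by
    simpa only [star_mulVec, Pi.star_single, star_one] using congrArg star hcol
  rw [single_eq_single_vecMulVec_single, mul_vecMulVec, vecMulVec_mul, hcol, hrow,
    single_eq_single_vecMulVec_single]

section TransitiveAction

variable {G X : Type*} [Group G] [MulAction G X] [Fintype G] [IsPretransitive G X]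

theorem sum_comp_smul_eq_of_isPretransitive {M : Type*} [AddCommMonoid M] (f : X → M)
    (x y : X) : ∑ g : G, f (g • x) = ∑ g : G, f (g • y) := by
  obtain ⟨h, rfl⟩ := exists_smul_eq G y x
  exact Fintype.sum_equiv (Equiv.mulRight h) _ _ fun g => by simp [mul_smul]

variable [Fintype X]

theorem card_smul_sum_comp_smul_of_isPretransitive {M : Type*} [AddCommMonoid M] (f : X → M)
    (x : X) : Fintype.card X • ∑ g : G, f (g • x) = Fintype.card G • ∑ y : X, f y :=
  calc Fintype.card X • ∑ g : G, f (g • x)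
      = ∑ y : X, ∑ g : G, f (g • y) := by
        rw [← Finset.card_univ, ← Finset.sum_const]
        exact Finset.sum_congr rfl fun y _ => sum_comp_smul_eq_of_isPretransitive f x y
    _ = ∑ g : G, ∑ y : X, f (g • y) := Finset.sum_comm
    _ = ∑ g : G, ∑ y : X, f y :=
        Finset.sum_congr rfl fun g _ => Fintype.sum_equiv (MulAction.toPerm g) _ _ fun _ => rfl
    _ = Fintype.card G • ∑ y : X, f y := by rw [Finset.sum_const, Finset.card_univ]

variable [DecidableEq X] {𝕜 : Type*} [Field 𝕜] [CharZero 𝕜]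

theorem sum_single_smul_eq_card_div_card_smul_one (x : X) :
    ∑ g : G, single (g • x) (g • x) (1 : 𝕜) = ((Fintype.card G : 𝕜) / Fintype.card X) • 1 := by
  have hX : (Fintype.card X : 𝕜) ≠ 0 := Nat.cast_ne_zero.mpr (Fintype.card_pos_iff.mpr ⟨x⟩).ne'
  have h := card_smul_sum_comp_smul_of_isPretransitive (G := G) (fun y => single y y (1 : 𝕜)) x
  rw [sum_single_one, ← Nat.cast_smul_eq_nsmul 𝕜, ← Nat.cast_smul_eq_nsmul 𝕜] at h
  rw [div_eq_inv_mul, mul_smul, ← h, inv_smul_smul₀ hX]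

theorem twirl_single_eq_inv_card_smul_one [StarRing 𝕜] (P : G → Matrix X X 𝕜)
    (hP : ∀ g i j, P g i j = if i = g • j then 1 else 0) (U : unitaryGroup X 𝕜) (x : X) :
    (Fintype.card G : 𝕜)⁻¹ • ∑ g : G,
        (U : Matrix X X 𝕜)ᴴ * P g * single x x 1 * (P g)ᴴ * (U : Matrix X X 𝕜) =
      (Fintype.card X : 𝕜)⁻¹ • 1 := by
  have hG : (Fintype.card G : 𝕜) ≠ 0 := Nat.cast_ne_zero.mpr Fintype.card_ne_zero
  have hU : (U : Matrix X X 𝕜)ᴴ * (U : Matrix X X 𝕜) = 1 := UnitaryGroup.star_mul_self U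
  have hconj : ∀ g, (U : Matrix X X 𝕜)ᴴ * P g * single x x 1 * (P g)ᴴ * (U : Matrix X X 𝕜) =
      (U : Matrix X X 𝕜)ᴴ * single (g • x) (g • x) 1 * (U : Matrix X X 𝕜) := fun g => by
    rw [← mul_single_mul_conjTranspose_of_apply_eq_ite (g • ·) (P g) (hP g) x]
    simp only [Matrix.mul_assoc]
  rw [Finset.sum_congr rfl fun g _ => hconj g, ← Finset.sum_mul, ← Finset.mul_sum,
    sum_single_smul_eq_card_div_card_smul_one, mul_smul_comm, smul_mul_assoc, Matrix.mul_one, hU,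
    smul_smul, ← mul_div_assoc, inv_mul_cancel₀ hG, one_div]

end TransitiveAction

instance Pi.isPretransitive_perm {ι : Type*} {α : ι → Type*} :
    IsPretransitive (∀ i, Equiv.Perm (α i)) (∀ i, α i) where
  exists_smul_eq x y := by
    choose σ hσ using fun i => exists_smul_eq (Equiv.Perm (α i)) (x i) (y i)
    exact ⟨σ, funext hσ⟩

theorem blockwise_permutation_twirl_operator_general (n m : ℕ)
    (P : (Fin m → Equiv.Perm (Fin n)) →
      Matrix (Fin m → Fin n) (Fin m → Fin n) ℂ)
    (hP : ∀ σ x y, P σ x y = if x = (fun b => σ b (y b)) then 1 else 0)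
    (U : Matrix.unitaryGroup (Fin m → Fin n) ℂ) (xstar : Fin m → Fin n) :
    (((n.factorial : ℂ)) ^ m)⁻¹ • ∑ σ : Fin m → Equiv.Perm (Fin n),
        (U : Matrix (Fin m → Fin n) (Fin m → Fin n) ℂ)ᴴ * P σ *
          Matrix.single xstar xstar 1 * (P σ)ᴴ *
          (U : Matrix (Fin m → Fin n) (Fin m → Fin n) ℂ) =
      (((n : ℂ)) ^ m)⁻¹ • (1 : Matrix (Fin m → Fin n) (Fin m → Fin n) ℂ) := by
  have hcard_group : Fintype.card (Fin m → Equiv.Perm (Fin n)) = n.factorial ^ m := by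
    simp [Fintype.card_perm]
  have hcard_labels : Fintype.card (Fin m → Fin n) = n ^ m := by simp
  have h := twirl_single_eq_inv_card_smul_one P hP U xstar
  rwa [hcard_group, hcard_labels, Nat.cast_pow, Nat.cast_pow] at h

/-- Blockwise permutation twirl (operator form): averaging the conjugated rank-one
basis projector over independent per-block permutations, sandwiched between `Uᴴ`
and `U` for any unitary `U`, gives the maximally mixed operator `(1/D) • 1` with
`D = n^m`. -/
theorem blockwise_permutation_twirl_operator (n m : ℕ) (hn : 1 ≤ n) (hm : 1 ≤ m)
    (P : (Fin m → Equiv.Perm (Fin n)) →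
      Matrix (Fin m → Fin n) (Fin m → Fin n) ℂ)
    (hP : ∀ σ x y, P σ x y = if x = (fun b => σ b (y b)) then 1 else 0)
    (U : Matrix.unitaryGroup (Fin m → Fin n) ℂ) (xstar : Fin m → Fin n) :
    (((n.factorial : ℂ)) ^ m)⁻¹ • ∑ σ : Fin m → Equiv.Perm (Fin n),
        (U : Matrix (Fin m → Fin n) (Fin m → Fin n) ℂ)ᴴ * P σ *
          Matrix.single xstar xstar 1 * (P σ)ᴴ *
          (U : Matrix (Fin m → Fin n) (Fin m → Fin n) ℂ) =
      (((n : ℂ)) ^ m)⁻¹ • (1 : Matrix (Fin m → Fin n) (Fin m → Fin n) ℂ) :=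
  blockwise_permutation_twirl_operator_general n m P hP U xstar
end

section
/- Fix integers n ≥ 1 and m ≥ 1, let I = (Fin m → Fin n) and D = n^m. For a tuple σ : Fin m → Equiv.Perm (Fin n), let Π_σ : Equiv.Perm I be the blockwise permutation x ↦ (fun b => σ b (x b)) and P_σ : Matrix I I ℂ its permutation matrix. Then for every matrix U in the unitary group of Matrix I I ℂ, every x* : I, and every vector φ : I → ℂ with Σ_x ‖φ x‖² = 1, the average over all (n!)^m tuples σ satisfies (1/(n!)^m) Σ_σ ‖(((P_σ)ᴴ · U) *ᵥ φ) x*‖² = 1/D. -/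
/-!
The amplitude `(P_σᴴ U φ)(x*)` is `ψ(σ • x*)` with `ψ = U φ`, a unit vector. The blockwise
permutation group acts transitively on the labels, so averaging `‖ψ(σ • x*)‖²` over the group
gives the same value for every starting label `x*`; averaging also over `x*` and exchanging the
sums shows that this value is the uniform average `(∑ x, ‖ψ x‖²) / D = 1 / D`.
-/

open Matrix

namespace MulAction

instance isPretransitive_pi {ι : Type*} {G X : ι → Type*} [∀ i, Group (G i)]
    [∀ i, MulAction (G i) (X i)] [∀ i, IsPretransitive (G i) (X i)] :
    IsPretransitive (∀ i, G i) (∀ i, X i) where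
  exists_smul_eq x y :=
    ⟨fun i => (exists_smul_eq (G i) (x i) (y i)).choose,
      funext fun i => (exists_smul_eq (G i) (x i) (y i)).choose_spec⟩

variable {G X : Type*} [Group G] [MulAction G X]

theorem sum_smul_eq_of_isPretransitive {M : Type*} [AddCommMonoid M] [Fintype G]
    [IsPretransitive G X] (f : X → M) (x y : X) :
    ∑ g : G, f (g • y) = ∑ g : G, f (g • x) := by
  obtain ⟨h, rfl⟩ := exists_smul_eq G x y
  simpa only [Equiv.coe_mulRight, mul_smul] using
    Equiv.sum_comp (Equiv.mulRight h) (fun g => f (g • x))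

theorem card_nsmul_sum_smul {M : Type*} [AddCommMonoid M] [Fintype G] [Fintype X]
    [IsPretransitive G X] (f : X → M) (x : X) :
    Fintype.card X • ∑ g : G, f (g • x) = Fintype.card G • ∑ y, f y := calc
  Fintype.card X • ∑ g : G, f (g • x) = ∑ y : X, ∑ g : G, f (g • y) := by
    simp only [sum_smul_eq_of_isPretransitive f x, Finset.sum_const, Finset.card_univ]
  _ = ∑ g : G, ∑ y : X, f (g • y) := Finset.sum_comm
  _ = ∑ _g : G, ∑ y : X, f y :=
    Finset.sum_congr rfl fun g _ => Equiv.sum_comp (MulAction.toPerm g) f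
  _ = Fintype.card G • ∑ y, f y := by rw [Finset.sum_const, Finset.card_univ]

end MulAction

namespace Matrix

variable {ι : Type*} [Fintype ι]

theorem conjTranspose_mulVec_apply_of_eq_ite {R : Type*} [NonAssocSemiring R] [StarRing R]
    [DecidableEq ι] {P : Matrix ι ι R} {π : ι → ι}
    (hP : ∀ x y, P x y = if x = π y then 1 else 0) (v : ι → R) (x : ι) :
    (Pᴴ *ᵥ v) x = v (π x) := by
  simp [mulVec, dotProduct, hP, apply_ite star]

theorem ofReal_sum_norm_sq {𝕜 : Type*} [RCLike 𝕜] (v : ι → 𝕜) :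
    ((∑ i, ‖v i‖ ^ 2 : ℝ) : 𝕜) = star v ⬝ᵥ v := by
  simp [dotProduct, RCLike.conj_mul]

theorem sum_norm_sq_mulVec_of_mem_unitaryGroup {𝕜 : Type*} [RCLike 𝕜] [DecidableEq ι]
    {U : Matrix ι ι 𝕜} (hU : U ∈ unitaryGroup ι 𝕜) (v : ι → 𝕜) :
    ∑ i, ‖(U *ᵥ v) i‖ ^ 2 = ∑ i, ‖v i‖ ^ 2 := by
  apply RCLike.ofReal_injective (K := 𝕜)
  rw [ofReal_sum_norm_sq, ofReal_sum_norm_sq, star_mulVec, dotProduct_mulVec, vecMul_vecMul,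
    ← star_eq_conjTranspose, mem_unitaryGroup_iff'.1 hU, vecMul_one]

end Matrix

theorem blockwise_permutation_twirl_scalar_general (n m : ℕ)
    (P : (Fin m → Equiv.Perm (Fin n)) →
      Matrix (Fin m → Fin n) (Fin m → Fin n) ℂ)
    (hP : ∀ σ x y, P σ x y = if x = (fun b => σ b (y b)) then 1 else 0)
    (U : Matrix.unitaryGroup (Fin m → Fin n) ℂ) (xstar : Fin m → Fin n)
    (φ : (Fin m → Fin n) → ℂ) (hφ : ∑ x, ‖φ x‖ ^ 2 = 1) :
    (((n.factorial : ℝ)) ^ m)⁻¹ * ∑ σ : Fin m → Equiv.Perm (Fin n),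
        ‖((((P σ)ᴴ * (U : Matrix (Fin m → Fin n) (Fin m → Fin n) ℂ)) *ᵥ φ) xstar)‖ ^ 2 =
      (((n : ℝ)) ^ m)⁻¹ := by
  simp only [← mulVec_mulVec]
  set ψ := (U : Matrix (Fin m → Fin n) (Fin m → Fin n) ℂ) *ᵥ φ
  have hamplitude : ∀ σ : Fin m → Equiv.Perm (Fin n), ((P σ)ᴴ *ᵥ ψ) xstar = ψ (σ • xstar) :=
    fun σ => conjTranspose_mulVec_apply_of_eq_ite (hP σ) ψ xstar
  simp only [hamplitude]
  have hψ : ∑ x, ‖ψ x‖ ^ 2 = 1 := (sum_norm_sq_mulVec_of_mem_unitaryGroup U.2 φ).trans hφ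
  have htwirl := MulAction.card_nsmul_sum_smul (G := Fin m → Equiv.Perm (Fin n))
    (fun x => ‖ψ x‖ ^ 2) xstar
  simp only [Fintype.card_fun, Fintype.card_perm, Fintype.card_fin, hψ, nsmul_eq_mul,
    Nat.cast_pow, mul_one] at htwirl
  have hD : (n : ℝ) ^ m ≠ 0 := by
    have : Nonempty (Fin m → Fin n) := ⟨xstar⟩
    simpa using (Fintype.card_ne_zero : Fintype.card (Fin m → Fin n) ≠ 0)
  field_simp
  linarith

/-- Blockwise permutation twirl (scalar form): for any unitary `U`, any target
basis label `x*`, and any unit vector `φ`, the success probability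
`|⟨x*| P_σᴴ U |φ⟩|²`, averaged over independent uniform per-block permutations,
equals `1/D` with `D = n^m`. -/
theorem blockwise_permutation_twirl_scalar (n m : ℕ) (hn : 1 ≤ n) (hm : 1 ≤ m)
    (P : (Fin m → Equiv.Perm (Fin n)) →
      Matrix (Fin m → Fin n) (Fin m → Fin n) ℂ)
    (hP : ∀ σ x y, P σ x y = if x = (fun b => σ b (y b)) then 1 else 0)
    (U : Matrix.unitaryGroup (Fin m → Fin n) ℂ) (xstar : Fin m → Fin n)
    (φ : (Fin m → Fin n) → ℂ) (hφ : ∑ x, ‖φ x‖ ^ 2 = 1) :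
    (((n.factorial : ℝ)) ^ m)⁻¹ * ∑ σ : Fin m → Equiv.Perm (Fin n),
        ‖((((P σ)ᴴ * (U : Matrix (Fin m → Fin n) (Fin m → Fin n) ℂ)) *ᵥ φ) xstar)‖ ^ 2 =
      (((n : ℝ)) ^ m)⁻¹ :=
  blockwise_permutation_twirl_scalar_general n m P hP U xstar φ hφ
end

section
/- Let n ≥ 1, let γ be a nonzero real number, and let C : Fin n → Fin n → ℝ. Define M : Matrix (Fin n) (Fin n) ℂ by M j k = exp(−i γ (C j k)). Then the rank of M equals 1 if and only if there exist functions α, β : Fin n → ℝ such that for all j, k there exists an integer z with C j k = α j + β k + z · (2π/γ); equivalently, rank M = 1 iff M j k factors as a(j)·b(k) for some functions a, b : Fin n → ℂ. -/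
/-!
Over a field, a nonzero matrix has rank one exactly when it is an outer product `a bᵀ`.
For the nowhere-vanishing phase matrix `e^{-iγC}`, such a factorization forces the relation
`M j k * M j₀ k₀ = M j k₀ * M j₀ k`, i.e. `C j k + C j₀ k₀ ≡ C j k₀ + C j₀ k` modulo `2π/γ`,
which is additivity with `α = C · k₀` and `β = C j₀ · - C j₀ k₀`; conversely, additive
phases factor directly since `e^{-iγ(x+y)} = e^{-iγx} e^{-iγy}`.
-/

open Matrix

namespace Matrix

variable {K m n : Type*} [Field K] [Fintype m] [Fintype n]

theorem rank_eq_zero_iff {M : Matrix m n K} : M.rank = 0 ↔ M = 0 := by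
  rw [rank_eq_finrank_span_cols, Submodule.finrank_eq_zero, Submodule.span_eq_bot,
    Set.forall_mem_range]
  exact ⟨fun h => ext fun i k => congrFun (h k) i, fun h k => by rw [h]; rfl⟩

theorem exists_eq_vecMulVec_of_rank_eq_one {M : Matrix m n K} (h : M.rank = 1) :
    ∃ a b, M = vecMulVec a b := by
  rw [rank_eq_finrank_span_cols, finrank_eq_one_iff'] at h
  obtain ⟨v, -, hv⟩ := h
  choose c hc using fun k => hv ⟨M.col k, Submodule.subset_span (Set.mem_range_self k)⟩
  refine ⟨v, c, ext fun i k => ?_⟩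
  rw [vecMulVec_apply, mul_comm, ← col_apply M k i]
  exact congrFun (congrArg Subtype.val (hc k)).symm i

theorem rank_eq_one_iff_exists_eq_vecMulVec {M : Matrix m n K} (hM : M ≠ 0) :
    M.rank = 1 ↔ ∃ a b, M = vecMulVec a b := by
  refine ⟨exists_eq_vecMulVec_of_rank_eq_one, ?_⟩
  rintro ⟨a, b, rfl⟩
  have := rank_vecMulVec_le a b
  have := mt rank_eq_zero_iff.mp hM
  omega

end Matrix

noncomputable def phase (γ x : ℝ) : ℂ := Complex.exp (-(Complex.I * γ * x))

theorem phase_ne_zero (γ x : ℝ) : phase γ x ≠ 0 := Complex.exp_ne_zero _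

theorem phase_add (γ x y : ℝ) : phase γ (x + y) = phase γ x * phase γ y := by
  rw [phase, phase, phase, ← Complex.exp_add]
  push_cast
  ring_nf

theorem phase_eq_phase_iff {γ : ℝ} (hγ : γ ≠ 0) {x y : ℝ} :
    phase γ x = phase γ y ↔ ∃ z : ℤ, x = y + z * (2 * Real.pi / γ) := by
  rw [phase, phase, Complex.exp_eq_exp_iff_exists_int]
  have hγ' : (γ : ℂ) ≠ 0 := by exact_mod_cast hγ
  refine (Equiv.neg ℤ).exists_congr fun z => ?_
  rw [← Complex.ofReal_inj]
  push_cast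
  simp only [Equiv.neg_apply, Int.cast_neg]
  constructor <;> intro h
  · field_simp
    linear_combination Complex.I * h + (x * γ - γ * y + 2 * z * Real.pi) * Complex.I_sq
  · rw [h]
    field_simp
    linear_combination

theorem exists_additive_iff_exists_phase_factorization {ι κ : Type*} [Nonempty ι] [Nonempty κ]
    {γ : ℝ} (hγ : γ ≠ 0) (C : ι → κ → ℝ) :
    (∃ (α : ι → ℝ) (β : κ → ℝ), ∀ j k, ∃ z : ℤ, C j k = α j + β k + z * (2 * Real.pi / γ)) ↔
      ∃ (a : ι → ℂ) (b : κ → ℂ), ∀ j k, phase γ (C j k) = a j * b k := by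
  constructor
  · rintro ⟨α, β, h⟩
    refine ⟨fun j => phase γ (α j), fun k => phase γ (β k), fun j k => ?_⟩
    rw [← phase_add, phase_eq_phase_iff hγ]
    exact h j k
  · rintro ⟨a, b, h⟩
    obtain ⟨j₀⟩ := ‹Nonempty ι›
    obtain ⟨k₀⟩ := ‹Nonempty κ›
    refine ⟨fun j => C j k₀, fun k => C j₀ k - C j₀ k₀, fun j k => ?_⟩
    have cross : phase γ (C j k + C j₀ k₀) = phase γ (C j k₀ + C j₀ k) := by
      rw [phase_add, phase_add, h, h, h, h]
      ring
    obtain ⟨z, hz⟩ := (phase_eq_phase_iff hγ).mp cross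
    exact ⟨z, by linarith⟩

/-- Diagonal-entangler criterion: the phase matrix `M j k = e^{-iγ C(j,k)}` has
rank `1` iff the cost table `C` is additive modulo `2π/γ`, equivalently iff `M`
factors as `a(j)·b(k)`. -/
theorem diagonal_entangler_criterion (n : ℕ) (hn : 1 ≤ n) (γ : ℝ) (hγ : γ ≠ 0)
    (C : Fin n → Fin n → ℝ)
    (M : Matrix (Fin n) (Fin n) ℂ)
    (hM : ∀ j k, M j k = Complex.exp (-(Complex.I * γ * (C j k)))) :
    (M.rank = 1 ↔ ∃ α β : Fin n → ℝ, ∀ j k, ∃ z : ℤ,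
        C j k = α j + β k + z * (2 * Real.pi / γ)) ∧
    (M.rank = 1 ↔ ∃ a b : Fin n → ℂ, ∀ j k, M j k = a j * b k) := by
  have : NeZero n := ⟨by omega⟩
  have hM0 : M ≠ 0 := fun h => phase_ne_zero γ (C 0 0) ((hM 0 0).symm.trans (congrFun₂ h 0 0))
  have rank_iff : M.rank = 1 ↔ ∃ a b : Fin n → ℂ, ∀ j k, M j k = a j * b k := by
    simp only [rank_eq_one_iff_exists_eq_vecMulVec hM0, ← Matrix.ext_iff, vecMulVec_apply]
  have hM' : ∀ j k, M j k = phase γ (C j k) := hM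
  refine ⟨?_, rank_iff⟩
  rw [rank_iff, exists_additive_iff_exists_phase_factorization hγ]
  simp only [hM']
end
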